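/- Let J be a strongly stable ideal and G a J-marked set. Then G is a J-marked basis if and only if dim_K (G)_m ≤ dim_K J_m for every m ≥ 0, equivalently if and only if the monomials of N(J) are linearly independent in S/(G). -/

import Mathlib

open MvPolynomial

/-- Exponent vectors for monomials in `K[x_0, …, x_n]`. -/
abbrev E (n : ℕ) := Fin (n+1) →₀ ℕ

/-- Degree of a monomial (exponent vector). -/
def mdeg {n : ℕ} (m : E n) : ℕ := m.sum fun _ e => e

/-- `M` is the set of monomials of a monomial ideal: closed under multiplication. -/
def UpClosed {n : ℕ} (M : Set (E n)) : Prop := ∀ m ∈ M, ∀ d : E n, m + d ∈ M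

/-- Strongly stable: for `x^α ∈ J`, `i < j`, `x_i ∣ x^α` implies `x^α x_j / x_i ∈ J`. -/
def StronglyStable {n : ℕ} (M : Set (E n)) : Prop :=
  ∀ m ∈ M, ∀ i j : Fin (n+1), i < j → m i ≠ 0 →
    m - Finsupp.single i 1 + Finsupp.single j 1 ∈ M

/-- `B` is the minimal monomial basis of the monomial ideal with monomial set `M`. -/
def IsMinBasis {n : ℕ} (M : Set (E n)) (B : Finset (E n)) : Prop :=
  ↑B ⊆ M ∧ (∀ m ∈ M, ∃ b ∈ B, b ≤ m) ∧ (∀ b ∈ B, ∀ b' ∈ B, b ≤ b' → b = b')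

variable (K : Type*) [Field K]

/-- The monomial ideal `J` with monomial set `M`. -/
noncomputable def Jideal {n : ℕ} (M : Set (E n)) : Ideal (MvPolynomial (Fin (n+1)) K) :=
  Ideal.span ((fun m => monomial m (1:K)) '' M)

/-- The `K`-span `⟨N(J)⟩` of the monomials outside `M`. -/
noncomputable def NSpan {n : ℕ} (M : Set (E n)) : Submodule K (MvPolynomial (Fin (n+1)) K) :=
  Submodule.span K ((fun m => monomial m (1:K)) '' Mᶜ)

/-- A `J`-marked set: for each `b` in the minimal basis `B`, a homogeneous polynomial
`F b = x^b - Σ c_γ x^γ` with head term `x^b` and all other monomials outside `M`. -/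
def IsMarkedSet {n : ℕ} (M : Set (E n)) (B : Finset (E n))
    (F : E n → MvPolynomial (Fin (n+1)) K) : Prop :=
  ∀ b ∈ B, (F b).coeff b = 1 ∧
    F b ∈ homogeneousSubmodule (Fin (n+1)) K (mdeg b) ∧
    ∀ m ∈ (F b).support, m ≠ b → m ∉ M

/-- `S = I ⊕ ⟨N(J)⟩` as `K`-vector spaces, i.e. `N(J)` is a `K`-basis of `S/I`. -/
def IsMarkedBasisIdeal {n : ℕ} (M : Set (E n))
    (I : Ideal (MvPolynomial (Fin (n+1)) K)) : Prop :=
  Submodule.restrictScalars K I ⊓ NSpan K M = ⊥ ∧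
  Submodule.restrictScalars K I ⊔ NSpan K M = ⊤

/-- Hilbert function: `dim_K I_m`. -/
noncomputable def HF {n : ℕ} (I : Ideal (MvPolynomial (Fin (n+1)) K)) (m : ℕ) : ℕ :=
  Module.finrank K ↥(Submodule.restrictScalars K I ⊓ homogeneousSubmodule (Fin (n+1)) K m)




section Aux
variable {n : ℕ} {K : Type*} [Field K]

lemma mdeg_eq_degree {n : ℕ} (m : E n) : mdeg m = m.degree := rfl

/-- membership in the span of monomials over a set of exponents -/
lemma mem_span_monomials {A : Set (E n)} {f : MvPolynomial (Fin (n+1)) K} :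
    f ∈ Submodule.span K ((fun m => monomial m (1:K)) '' A) ↔ ↑f.support ⊆ A := by
  constructor
  · intro hf
    induction hf using Submodule.span_induction with
    | mem x hx =>
      obtain ⟨m, hm, rfl⟩ := hx
      intro d hd
      have := MvPolynomial.support_monomial_subset (s := m) (a := (1:K)) hd
      simp only [Finset.mem_singleton] at this
      subst this; exact hm
    | zero => simp
    | add x y hx hy ihx ihy =>
      intro d hd
      have := MvPolynomial.support_add (p := x) (q := y) hd
      rcases Finset.mem_union.mp this with h | h
      · exact ihx h
      · exact ihy h
    | smul c x hx ih =>
      intro d hd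
      have : d ∈ x.support := by
        simp only [Finset.mem_coe, MvPolynomial.mem_support_iff] at hd ⊢
        intro h0
        apply hd
        rw [MvPolynomial.coeff_smul, h0, smul_zero]
      exact ih this
  · intro hs
    rw [MvPolynomial.as_sum f]
    apply Submodule.sum_mem
    intro d hd
    have : (monomial d) (coeff d f) = coeff d f • (monomial d (1:K)) := by
      rw [MvPolynomial.smul_monomial, smul_eq_mul, mul_one]
    rw [this]
    exact Submodule.smul_mem _ _ (Submodule.subset_span ⟨d, hs hd, rfl⟩)

end Aux

section Key
variable {n : ℕ}


/-- the reverse-lex measure -/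
def rmu {n : ℕ} (η : E n) : Lex (Fin (n+1) → ℕ) := toLex (fun i => η i.rev)

/-- Key lemma: the cofactor strictly drops. -/
lemma key_lemma {M : Set (E n)} (hup : UpClosed M) {b' δ η η' : E n}
    (hb' : b' ∈ M) (hδ : δ ∉ M)
    (hsupp : ∀ i j : Fin (n+1), η' j ≠ 0 → b' i ≠ 0 → j ≤ i)
    (heq : η' + b' = η + δ) : rmu η' < rmu η := by
  have hpt : ∀ i, η' i + b' i = η i + δ i := by
    intro i
    have := DFunLike.congr_fun heq i
    simpa [Finsupp.add_apply] using this
  by_cases hee : η' = η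
  · subst hee
    have : b' = δ := by
      ext i; have := hpt i; omega
    exact absurd (this ▸ hb') hδ
  -- top differing index
  have hne : (Finset.univ.filter (fun i => η' i ≠ η i)).Nonempty := by
    by_contra h
    apply hee
    ext i
    by_contra hi
    exact h ⟨i, Finset.mem_filter.mpr ⟨Finset.mem_univ i, hi⟩⟩
  set D := (Finset.univ.filter (fun i => η' i ≠ η i)) with hD
  set i0 := D.max' hne with hi0
  have hi0mem : i0 ∈ D := D.max'_mem hne
  have hi0ne : η' i0 ≠ η i0 := (Finset.mem_filter.mp hi0mem).2
  have htop : ∀ j, i0 < j → η' j = η j := by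
    intro j hj
    by_contra hne'
    exact absurd (D.le_max' j (Finset.mem_filter.mpr ⟨Finset.mem_univ j, hne'⟩)) (not_le.mpr hj)
  rcases lt_or_gt_of_ne hi0ne with hlt | hgt
  · -- η' i0 < η i0 : strictly smaller in rmu
    refine ⟨i0.rev, ?_, ?_⟩
    · intro j hj
      have : i0 < j.rev := by
        have := Fin.rev_lt_rev.mpr hj
        rwa [Fin.rev_rev] at this
      simpa [rmu] using htop j.rev this
    · simpa [rmu, Fin.rev_rev] using hlt
  · -- η' i0 > η i0 : contradiction, δ ∈ M
    exfalso
    have hle : ∀ i, η i ≤ η' i := by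
      intro i
      by_contra hgt'
      push_neg at hgt'
      have hb'i : b' i ≠ 0 := by have := hpt i; omega
      have hη'i0 : η' i0 ≠ 0 := by omega
      have h1 : i0 ≤ i := hsupp i i0 hη'i0 hb'i
      have h2 : i ≤ i0 := D.le_max' i (Finset.mem_filter.mpr ⟨Finset.mem_univ i,
        by omega⟩)
      have : i = i0 := le_antisymm h2 h1
      subst this; omega
    have : b' + (η' - η) = δ := by
      ext i
      have h1 := hpt i
      have h2 := hle i
      simp only [Finsupp.add_apply, Finsupp.tsub_apply]
      omega
    exact hδ (this ▸ hup b' hb' (η' - η))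

end Key

section EK
variable {n : ℕ}

lemma mdeg_eq_sum (m : E n) : mdeg m = ∑ i : Fin (n+1), m i :=
  Finsupp.sum_fintype m _ (fun _ => rfl)

/-- Eliahou–Kervaire style decomposition exists. -/
lemma exists_EK {M : Set (E n)} {B : Finset (E n)} (hss : StronglyStable M)
    (hB : IsMinBasis M B) {γ : E n} (hγ : γ ∈ M) :
    ∃ b ∈ B, b ≤ γ ∧ ∀ i j : Fin (n+1), (γ - b) j ≠ 0 → b i ≠ 0 → j ≤ i := by
  classical
  set S := (Finset.Iic γ).filter (fun m => m ∈ M) with hS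
  have hγS : γ ∈ S := Finset.mem_filter.mpr ⟨Finset.mem_Iic.mpr le_rfl, hγ⟩
  obtain ⟨m₀, hm₀S, hm₀min⟩ := Finset.exists_min_image S mdeg ⟨γ, hγS⟩
  set T := S.filter (fun m => mdeg m = mdeg m₀) with hT
  have hm₀T : m₀ ∈ T := Finset.mem_filter.mpr ⟨hm₀S, rfl⟩
  obtain ⟨m, hmT, hmmax⟩ := Finset.exists_max_image T (fun m => ∑ i : Fin (n+1), (i:ℕ) * m i)
    ⟨m₀, hm₀T⟩
  have hmS : m ∈ S := (Finset.mem_filter.mp hmT).1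
  have hmdeg : mdeg m = mdeg m₀ := (Finset.mem_filter.mp hmT).2
  have hmM : m ∈ M := (Finset.mem_filter.mp hmS).2
  have hmγ : m ≤ γ := Finset.mem_Iic.mp (Finset.mem_filter.mp hmS).1
  -- exchange property for m
  have hexch : ∀ i j : Fin (n+1), (γ - m) j ≠ 0 → m i ≠ 0 → j ≤ i := by
    intro i j hj hi
    by_contra hji
    push_neg at hji
    set m' := m - Finsupp.single i 1 + Finsupp.single j 1 with hm'
    have hm'M : m' ∈ M := hss m hmM i j hji hi
    have hij : i ≠ j := ne_of_lt hji
    have happ : ∀ k, m' k + (if i = k then 1 else 0) = m k + (if j = k then 1 else 0) := by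
      intro k
      have h1 : m' k = m k - (if i = k then 1 else 0) + (if j = k then 1 else 0) := by
        simp [hm', Finsupp.add_apply, Finsupp.tsub_apply, Finsupp.single_apply]
      by_cases hki : i = k <;> by_cases hkj : j = k
      · exact absurd (hki.trans hkj.symm) hij
      · have h2 : m k ≠ 0 := hki ▸ hi
        rw [if_pos hki, if_neg hkj] at h1 ⊢; omega
      · rw [if_neg hki, if_pos hkj] at h1 ⊢; omega
      · rw [if_neg hki, if_neg hkj] at h1 ⊢; omega
    have hγj : m j < γ j := by
      have := Finsupp.tsub_apply γ m j
      have h2 := Finsupp.le_def.mp hmγ j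
      omega
    have hm'γ : m' ≤ γ := by
      rw [Finsupp.le_def]
      intro k
      have h1 := happ k
      have h2 := Finsupp.le_def.mp hmγ k
      by_cases hki : i = k <;> by_cases hkj : j = k
      · exact absurd (hki.trans hkj.symm) hij
      · rw [if_pos hki, if_neg hkj] at h1; omega
      · rw [if_neg hki, if_pos hkj] at h1; rw [← hkj] at h1 ⊢; omega
      · rw [if_neg hki, if_neg hkj] at h1; omega
    have hm'S : m' ∈ S := Finset.mem_filter.mpr ⟨Finset.mem_Iic.mpr hm'γ, hm'M⟩
    have hsum1 : (∑ k : Fin (n+1), m' k) + 1 = (∑ k : Fin (n+1), m k) + 1 := by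
      have := Finset.sum_congr rfl (fun k (_ : k ∈ Finset.univ) => happ k)
      rw [Finset.sum_add_distrib, Finset.sum_add_distrib] at this
      rw [Finset.sum_ite_eq Finset.univ i (fun _ => 1),
        Finset.sum_ite_eq Finset.univ j (fun _ => 1)] at this
      simpa using this
    have hdeg' : mdeg m' = mdeg m := by
      rw [mdeg_eq_sum, mdeg_eq_sum]; omega
    have hm'T : m' ∈ T := Finset.mem_filter.mpr ⟨hm'S, hdeg'.trans hmdeg⟩
    have happw : ∀ k : Fin (n+1), (k:ℕ) * m' k + (if i = k then (i:ℕ) else 0)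
        = (k:ℕ) * m k + (if j = k then (j:ℕ) else 0) := by
      intro k
      have h1 := happ k
      by_cases hki : i = k <;> by_cases hkj : j = k
      · exact absurd (hki.trans hkj.symm) hij
      · rw [if_pos hki, if_neg hkj] at h1 ⊢
        rw [hki]
        have h2 : m k = m' k + 1 := by omega
        rw [h2]; ring
      · rw [if_neg hki, if_pos hkj] at h1 ⊢
        rw [hkj]
        have h2 : m' k = m k + 1 := by omega
        rw [h2]; ring
      · rw [if_neg hki, if_neg hkj] at h1 ⊢
        have h2 : m' k = m k := by omega
        rw [h2]
    have hwlt : ∑ k : Fin (n+1), (k:ℕ) * m k < ∑ k : Fin (n+1), (k:ℕ) * m' k := by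
      have := Finset.sum_congr rfl (fun k (_ : k ∈ Finset.univ) => happw k)
      rw [Finset.sum_add_distrib, Finset.sum_add_distrib] at this
      rw [Finset.sum_ite_eq Finset.univ i (fun _ => (i:ℕ)),
        Finset.sum_ite_eq Finset.univ j (fun _ => (j:ℕ))] at this
      simp only [Finset.mem_univ, if_true] at this
      have hji' : (i:ℕ) < (j:ℕ) := hji
      omega
    exact absurd (hmmax m' hm'T) (not_le.mpr hwlt)
  -- now pick b ∈ B below m; minimality of degree forces b = m
  obtain ⟨b, hbB, hbm⟩ := hB.2.1 m hmM
  have hbM : b ∈ M := hB.1 hbB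
  have hbγ : b ≤ γ := le_trans hbm hmγ
  have hbS : b ∈ S := Finset.mem_filter.mpr ⟨Finset.mem_Iic.mpr hbγ, hbM⟩
  have hdegle : mdeg b ≤ mdeg m := by
    rw [mdeg_eq_sum, mdeg_eq_sum]
    exact Finset.sum_le_sum (fun i _ => Finsupp.le_def.mp hbm i)
  have hdegge : mdeg m ≤ mdeg b := hmdeg ▸ hm₀min b hbS
  have hbeq : b = m := by
    by_contra hne
    have : ∃ i, b i < m i := by
      by_contra hall
      push_neg at hall
      exact hne (le_antisymm hbm (Finsupp.le_def.mpr hall))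
    obtain ⟨i, hilt⟩ := this
    have : mdeg b < mdeg m := by
      rw [mdeg_eq_sum, mdeg_eq_sum]
      exact Finset.sum_lt_sum (fun k _ => Finsupp.le_def.mp hbm k) ⟨i, Finset.mem_univ i, hilt⟩
    omega
  subst hbeq
  exact ⟨b, hbB, hbγ, hexch⟩

end EK

section SupTop
variable {n : ℕ} {K : Type*} [Field K]

lemma monomial_mem_sup {M : Set (E n)} (hup : UpClosed M) (hss : StronglyStable M)
    {B : Finset (E n)} (hB : IsMinBasis M B) {F : E n → MvPolynomial (Fin (n+1)) K}
    (hF : IsMarkedSet K M B F) {I : Ideal (MvPolynomial (Fin (n+1)) K)}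
    (hI : I = Ideal.span (F '' ↑B)) (γ : E n) :
    monomial γ (1:K) ∈ Submodule.restrictScalars K I ⊔ NSpan K M := by
  set P := Submodule.restrictScalars K I ⊔ NSpan K M with hP
  have wf : WellFounded ((· < ·) : Lex (Fin (n+1) → ℕ) → Lex (Fin (n+1) → ℕ) → Prop) :=
    IsWellFounded.wf
  have main : ∀ w : Lex (Fin (n+1) → ℕ), ∀ γ : E n, γ ∈ M → ∀ b ∈ B, b ≤ γ →
      (∀ i j : Fin (n+1), (γ - b) j ≠ 0 → b i ≠ 0 → j ≤ i) → rmu (γ - b) = w →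
      monomial γ (1:K) ∈ P := by
    intro w
    refine wf.induction
      (C := fun w => ∀ γ : E n, γ ∈ M → ∀ b ∈ B, b ≤ γ →
        (∀ i j : Fin (n+1), (γ - b) j ≠ 0 → b i ≠ 0 → j ≤ i) → rmu (γ - b) = w →
        monomial γ (1:K) ∈ P) w ?_
    clear w
    intro w IH γ hγ b hbB hbγ hcond hw
    obtain ⟨hc1, _, hc3⟩ := hF b hbB
    set η := γ - b with hη
    have hηb : η + b = γ := tsub_add_cancel_of_le hbγ
    have hbF : b ∈ (F b).support := MvPolynomial.mem_support_iff.mpr (by rw [hc1]; exact one_ne_zero)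
    have hexp : monomial η (1:K) * F b
        = ∑ δ ∈ (F b).support, monomial (η + δ) (coeff δ (F b)) := by
      conv_lhs => rw [MvPolynomial.as_sum (F b)]
      rw [Finset.mul_sum]
      exact Finset.sum_congr rfl fun δ _ => by rw [MvPolynomial.monomial_mul, one_mul]
    have hsplit : monomial η (1:K) * F b = monomial γ (1:K)
        + ∑ δ ∈ (F b).support.erase b, monomial (η + δ) (coeff δ (F b)) := by
      rw [hexp, ← Finset.add_sum_erase _ _ hbF, hc1, hηb]
    have hmemI : monomial η (1:K) * F b ∈ P := by
      apply Submodule.mem_sup_left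
      rw [Submodule.restrictScalars_mem, hI]
      exact Ideal.mul_mem_left _ _ (Ideal.subset_span ⟨b, hbB, rfl⟩)
    have hterm : ∀ δ ∈ (F b).support.erase b, monomial (η + δ) (coeff δ (F b)) ∈ P := by
      intro δ hδe
      have hδs : δ ∈ (F b).support := (Finset.mem_erase.mp hδe).2
      have hδne : δ ≠ b := (Finset.mem_erase.mp hδe).1
      have hδM : δ ∉ M := hc3 δ hδs hδne
      have hrw : monomial (η + δ) (coeff δ (F b)) = coeff δ (F b) • monomial (η + δ) (1:K) := by
        rw [MvPolynomial.smul_monomial, smul_eq_mul, mul_one]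
      rw [hrw]
      apply Submodule.smul_mem
      by_cases hM2 : η + δ ∈ M
      · obtain ⟨b₂, hb₂B, hb₂le, hb₂cond⟩ := exists_EK hss hB hM2
        have heq2 : ((η + δ) - b₂) + b₂ = η + δ := tsub_add_cancel_of_le hb₂le
        have hlt : rmu ((η + δ) - b₂) < w :=
          hw ▸ key_lemma hup (hB.1 hb₂B) hδM hb₂cond heq2
        exact IH _ hlt (η + δ) hM2 b₂ hb₂B hb₂le hb₂cond rfl
      · exact Submodule.mem_sup_right (Submodule.subset_span ⟨η + δ, hM2, rfl⟩)
    have hγeq : monomial γ (1:K) = monomial η (1:K) * F b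
        - ∑ δ ∈ (F b).support.erase b, monomial (η + δ) (coeff δ (F b)) := by
      rw [hsplit]; ring
    rw [hγeq]
    exact Submodule.sub_mem _ hmemI (Submodule.sum_mem _ hterm)
  by_cases hγ : γ ∈ M
  · obtain ⟨b, hbB, hble, hbcond⟩ := exists_EK hss hB hγ
    exact main _ γ hγ b hbB hble hbcond rfl
  · exact Submodule.mem_sup_right (Submodule.subset_span ⟨γ, hγ, rfl⟩)

lemma sup_eq_top {M : Set (E n)} (hup : UpClosed M) (hss : StronglyStable M)
    {B : Finset (E n)} (hB : IsMinBasis M B) {F : E n → MvPolynomial (Fin (n+1)) K}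
    (hF : IsMarkedSet K M B F) {I : Ideal (MvPolynomial (Fin (n+1)) K)}
    (hI : I = Ideal.span (F '' ↑B)) :
    Submodule.restrictScalars K I ⊔ NSpan K M = ⊤ := by
  rw [eq_top_iff]
  intro f _
  rw [MvPolynomial.as_sum f]
  apply Submodule.sum_mem
  intro d _
  have hrw : (monomial d) (coeff d f) = coeff d f • monomial d (1:K) := by
    rw [MvPolynomial.smul_monomial, smul_eq_mul, mul_one]
  rw [hrw]
  exact Submodule.smul_mem _ _ (monomial_mem_sup hup hss hB hF hI d)

end SupTop

section Graded
variable {n : ℕ} {K : Type*} [Field K]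

lemma homComp_mem {M : Set (E n)} {B : Finset (E n)} {F : E n → MvPolynomial (Fin (n+1)) K}
    (hF : IsMarkedSet K M B F) {I : Ideal (MvPolynomial (Fin (n+1)) K)}
    (hI : I = Ideal.span (F '' ↑B)) {f : MvPolynomial (Fin (n+1)) K} (hf : f ∈ I) (m : ℕ) :
    homogeneousComponent m f ∈ I := by
  set T : Set (MvPolynomial (Fin (n+1)) K) :=
    {g | ∃ η : E n, ∃ b ∈ B, g = monomial η (1:K) * F b} with hT
  -- T generators are in I
  have hTI : ∀ g ∈ T, g ∈ I := by
    rintro g ⟨η, b, hbB, rfl⟩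
    rw [hI]
    exact Ideal.mul_mem_left _ _ (Ideal.subset_span ⟨b, hbB, rfl⟩)
  -- span K T is closed under multiplication by arbitrary polynomials
  have hmul : ∀ f ∈ Submodule.span K T, ∀ r : MvPolynomial (Fin (n+1)) K,
      r * f ∈ Submodule.span K T := by
    intro f hf
    induction hf using Submodule.span_induction with
    | mem x hx =>
      intro r
      obtain ⟨η, b, hbB, rfl⟩ := hx
      rw [MvPolynomial.as_sum r, Finset.sum_mul]
      apply Submodule.sum_mem
      intro d _
      have : monomial d (coeff d r) * (monomial η (1:K) * F b)
          = coeff d r • (monomial (d + η) (1:K) * F b) := by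
        rw [← mul_assoc, MvPolynomial.monomial_mul, mul_one, ← smul_mul_assoc,
          MvPolynomial.smul_monomial, smul_eq_mul, mul_one]
      rw [this]
      exact Submodule.smul_mem _ _ (Submodule.subset_span ⟨d + η, b, hbB, rfl⟩)
    | zero => intro r; rw [mul_zero]; exact Submodule.zero_mem _
    | add x y hx hy ihx ihy =>
      intro r; rw [mul_add]; exact Submodule.add_mem _ (ihx r) (ihy r)
    | smul c x hx ih =>
      intro r; rw [mul_smul_comm]; exact Submodule.smul_mem _ _ (ih r)
  -- I is contained in span K T
  have hIT : f ∈ Submodule.span K T := by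
    rw [hI] at hf
    induction hf using Submodule.span_induction with
    | mem x hx =>
      obtain ⟨b, hbB, rfl⟩ := hx
      have : F b = monomial (0 : E n) (1:K) * F b := by
        rw [MvPolynomial.monomial_zero', MvPolynomial.C_1, one_mul]
      exact this ▸ Submodule.subset_span ⟨0, b, hbB, rfl⟩
    | zero => exact Submodule.zero_mem _
    | add x y hx hy ihx ihy => exact Submodule.add_mem _ ihx ihy
    | smul r x hx ih => rw [smul_eq_mul]; exact hmul x ih r
  -- conclude by span induction
  clear hf
  induction hIT using Submodule.span_induction with
  | mem x hx =>
    obtain ⟨η, b, hbB, rfl⟩ := hx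
    have hhom : monomial η (1:K) * F b ∈
        homogeneousSubmodule (Fin (n+1)) K (η.degree + mdeg b) := by
      rw [mem_homogeneousSubmodule]
      exact (MvPolynomial.isHomogeneous_monomial (1:K) rfl).mul
        (mem_homogeneousSubmodule _ _ |>.mp ((hF b hbB).2.1))
    rw [MvPolynomial.homogeneousComponent_of_mem hhom]
    split
    · exact hTI _ ⟨η, b, hbB, rfl⟩
    · exact Ideal.zero_mem _
  | zero => rw [map_zero]; exact Ideal.zero_mem _
  | add x y hx hy ihx ihy => rw [map_add]; exact Ideal.add_mem _ ihx ihy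
  | smul c x hx ih =>
    rw [map_smul, MvPolynomial.smul_eq_C_mul]
    exact Ideal.mul_mem_left _ _ ih

end Graded

section Slices
variable {n : ℕ} {K : Type*} [Field K]

lemma homog_mem_iff {f : MvPolynomial (Fin (n+1)) K} {m : ℕ} :
    f ∈ homogeneousSubmodule (Fin (n+1)) K m ↔ ∀ d ∈ f.support, Finsupp.degree d = m := by
  rw [mem_homogeneousSubmodule]
  constructor
  · intro h d hd
    rw [Finsupp.degree_eq_weight_one]
    exact h (MvPolynomial.mem_support_iff.mp hd)
  · intro h d hd
    have := h d (MvPolynomial.mem_support_iff.mpr hd)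
    rw [Finsupp.degree_eq_weight_one] at this
    exact this

lemma span_inf_homog (A : Set (E n)) (m : ℕ) :
    Submodule.span K ((fun d => monomial d (1:K)) '' A) ⊓ homogeneousSubmodule (Fin (n+1)) K m
      = Submodule.span K ((fun d => monomial d (1:K)) '' (A ∩ {d | Finsupp.degree d = m})) := by
  ext f
  rw [Submodule.mem_inf, mem_span_monomials, mem_span_monomials, homog_mem_iff]
  constructor
  · rintro ⟨h1, h2⟩ d hd
    exact ⟨h1 hd, h2 d hd⟩
  · intro h
    exact ⟨fun d hd => (h hd).1, fun d hd => (h hd).2⟩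

lemma homogSub_eq_span (m : ℕ) :
    homogeneousSubmodule (Fin (n+1)) K m
      = Submodule.span K ((fun d => monomial d (1:K)) '' {d : E n | Finsupp.degree d = m}) := by
  ext f
  rw [mem_span_monomials, homog_mem_iff]
  exact ⟨fun h d hd => h d hd, fun h d hd => h hd⟩

lemma Jideal_restrict {M : Set (E n)} (hup : UpClosed M) :
    Submodule.restrictScalars K (Jideal K M)
      = Submodule.span K ((fun d => monomial d (1:K)) '' M) := by
  apply le_antisymm
  · intro f hf
    rw [Submodule.restrictScalars_mem, Jideal] at hf
    rw [mem_span_monomials]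
    induction hf using Submodule.span_induction with
    | mem x hx =>
      obtain ⟨d, hd, rfl⟩ := hx
      intro e he
      have := MvPolynomial.support_monomial_subset he
      simp only [Finset.mem_singleton] at this
      subst this; exact hd
    | zero => simp
    | add x y hx hy ihx ihy =>
      intro d hd
      rcases Finset.mem_union.mp (MvPolynomial.support_add hd) with h | h
      · exact ihx h
      · exact ihy h
    | smul r x hx ih =>
      intro d hd
      rw [smul_eq_mul] at hd
      have hsub := MvPolynomial.support_mul r x hd
      rw [Finset.mem_add] at hsub
      obtain ⟨d1, hd1, d2, hd2, rfl⟩ := hsub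
      have : d2 + d1 ∈ M := hup d2 (ih hd2) d1
      rwa [add_comm d2 d1] at this
  · rw [Submodule.span_le]
    rintro g ⟨d, hd, rfl⟩
    rw [SetLike.mem_coe, Submodule.restrictScalars_mem]
    exact Ideal.subset_span ⟨d, hd, rfl⟩

lemma finite_slice (A : Set (E n)) (m : ℕ) : (A ∩ {d : E n | Finsupp.degree d = m}).Finite :=
  (Finsupp.finite_of_degree_le m).subset (fun d hd => le_of_eq hd.2)

lemma span_inf_span_of_disjoint {A B : Set (E n)} (h : Disjoint A B) :
    Submodule.span K ((fun d => monomial d (1:K)) '' A)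
      ⊓ Submodule.span K ((fun d => monomial d (1:K)) '' B) = ⊥ := by
  rw [eq_bot_iff]
  intro f hf
  rw [Submodule.mem_inf, mem_span_monomials, mem_span_monomials] at hf
  have hsupp : f.support = ∅ := by
    rw [← Finset.coe_eq_empty]
    exact Set.subset_eq_empty (Set.subset_inter hf.1 hf.2 |>.trans
      (Set.disjoint_iff_inter_eq_empty.mp h).subset) rfl
  rw [Submodule.mem_bot]
  exact MvPolynomial.support_eq_empty.mp hsupp

end Slices

section Dims
variable {n : ℕ} {K : Type*} [Field K]

lemma Dset_finite (m : ℕ) : ({d : E n | Finsupp.degree d = m}).Finite :=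
  (Finsupp.finite_of_degree_le m).subset (fun d hd => le_of_eq hd)

lemma partA {M : Set (E n)} (hup : UpClosed M) {I : Ideal (MvPolynomial (Fin (n+1)) K)}
    (hinf : Submodule.restrictScalars K I ⊓ NSpan K M = ⊥) (m : ℕ) :
    HF K I m ≤ HF K (Jideal K M) m := by
  classical
  set Dset : Set (E n) := {d | Finsupp.degree d = m} with hDset
  set D := homogeneousSubmodule (Fin (n+1)) K m with hD
  set Im := Submodule.restrictScalars K I ⊓ D with hIm
  set Nm := NSpan K M ⊓ D with hNm
  set Jm := Submodule.restrictScalars K (Jideal K M) ⊓ D with hJm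
  have hDspan : D = Submodule.span K ((fun d => monomial d (1:K)) '' Dset) := homogSub_eq_span m
  have hDfin : FiniteDimensional K D := by
    rw [hDspan]
    exact FiniteDimensional.span_of_finite K ((Dset_finite m).image _)
  have hJm' : Jm = Submodule.span K ((fun d => monomial d (1:K)) '' (M ∩ Dset)) := by
    rw [hJm, Jideal_restrict hup, hD, span_inf_homog]
  have hNm' : Nm = Submodule.span K ((fun d => monomial d (1:K)) '' (Mᶜ ∩ Dset)) := by
    rw [hNm, NSpan, hD, span_inf_homog]
  have hJNfd : FiniteDimensional K Jm := Submodule.finiteDimensional_of_le (le_trans inf_le_right le_rfl)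
  have hNfd : FiniteDimensional K Nm := Submodule.finiteDimensional_of_le (inf_le_right (a := NSpan K M))
  have hIfd : FiniteDimensional K Im := Submodule.finiteDimensional_of_le (inf_le_right (a := Submodule.restrictScalars K I))
  have hJN_sup : Jm ⊔ Nm = D := by
    have hsets : (M ∩ Dset) ∪ (Mᶜ ∩ Dset) = Dset := by
      rw [← Set.union_inter_distrib_right, Set.union_compl_self, Set.univ_inter]
    rw [hJm', hNm', ← Submodule.span_union, ← Set.image_union, hsets, hDspan]
  have hJN_inf : Jm ⊓ Nm = ⊥ := by
    rw [hJm', hNm']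
    exact span_inf_span_of_disjoint (by
      rw [Set.disjoint_left]
      rintro d ⟨hdM, -⟩ ⟨hdM', -⟩
      exact hdM' hdM)
  have hIN_inf : Im ⊓ Nm = ⊥ := by
    rw [eq_bot_iff]
    intro x hx
    have : x ∈ Submodule.restrictScalars K I ⊓ NSpan K M :=
      ⟨hx.1.1, hx.2.1⟩
    rw [hinf] at this
    exact this
  have e1 := Submodule.finrank_sup_add_finrank_inf_eq Jm Nm
  have e2 := Submodule.finrank_sup_add_finrank_inf_eq Im Nm
  rw [hJN_sup, hJN_inf] at e1
  rw [hIN_inf] at e2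
  have hle : Module.finrank K ↥(Im ⊔ Nm) ≤ Module.finrank K D :=
    Submodule.finrank_mono (sup_le inf_le_right inf_le_right)
  have hfb : Module.finrank K (↥(⊥ : Submodule K (MvPolynomial (Fin (n+1)) K))) = 0 :=
    finrank_bot K _
  rw [hfb] at e1 e2
  show Module.finrank K ↥Im ≤ Module.finrank K ↥Jm
  omega

lemma partB {M : Set (E n)} (hup : UpClosed M) {B : Finset (E n)}
    {F : E n → MvPolynomial (Fin (n+1)) K} (hF : IsMarkedSet K M B F)
    {I : Ideal (MvPolynomial (Fin (n+1)) K)} (hI : I = Ideal.span (F '' ↑B))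
    (hsup : Submodule.restrictScalars K I ⊔ NSpan K M = ⊤)
    (hdims : ∀ m : ℕ, HF K I m ≤ HF K (Jideal K M) m) :
    Submodule.restrictScalars K I ⊓ NSpan K M = ⊥ := by
  classical
  -- degreewise intersections are zero
  have main : ∀ m : ℕ, (Submodule.restrictScalars K I ⊓ homogeneousSubmodule (Fin (n+1)) K m)
      ⊓ (NSpan K M ⊓ homogeneousSubmodule (Fin (n+1)) K m) = ⊥ := by
    intro m
    set Dset : Set (E n) := {d | Finsupp.degree d = m} with hDset
    set D := homogeneousSubmodule (Fin (n+1)) K m with hD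
    set Im := Submodule.restrictScalars K I ⊓ D with hIm
    set Nm := NSpan K M ⊓ D with hNm
    set Jm := Submodule.restrictScalars K (Jideal K M) ⊓ D with hJm
    have hDspan : D = Submodule.span K ((fun d => monomial d (1:K)) '' Dset) := homogSub_eq_span m
    have hDfin : FiniteDimensional K D := by
      rw [hDspan]
      exact FiniteDimensional.span_of_finite K ((Dset_finite m).image _)
    have hJm' : Jm = Submodule.span K ((fun d => monomial d (1:K)) '' (M ∩ Dset)) := by
      rw [hJm, Jideal_restrict hup, hD, span_inf_homog]
    have hNm' : Nm = Submodule.span K ((fun d => monomial d (1:K)) '' (Mᶜ ∩ Dset)) := by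
      rw [hNm, NSpan, hD, span_inf_homog]
    have hJNfd : FiniteDimensional K Jm := Submodule.finiteDimensional_of_le (inf_le_right (a := Submodule.restrictScalars K (Jideal K M)))
    have hNfd : FiniteDimensional K Nm := Submodule.finiteDimensional_of_le (inf_le_right (a := NSpan K M))
    have hIfd : FiniteDimensional K Im := Submodule.finiteDimensional_of_le (inf_le_right (a := Submodule.restrictScalars K I))
    have hJN_sup : Jm ⊔ Nm = D := by
      have hsets : (M ∩ Dset) ∪ (Mᶜ ∩ Dset) = Dset := by
        rw [← Set.union_inter_distrib_right, Set.union_compl_self, Set.univ_inter]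
      rw [hJm', hNm', ← Submodule.span_union, ← Set.image_union, hsets, hDspan]
    have hJN_inf : Jm ⊓ Nm = ⊥ := by
      rw [hJm', hNm']
      exact span_inf_span_of_disjoint (by
        rw [Set.disjoint_left]
        rintro d ⟨hdM, -⟩ ⟨hdM', -⟩
        exact hdM' hdM)
    -- degreewise sup is everything
    have hIN_sup : Im ⊔ Nm = D := by
      apply le_antisymm (sup_le inf_le_right inf_le_right)
      intro f hfD
      have hf_top : f ∈ Submodule.restrictScalars K I ⊔ NSpan K M := hsup ▸ Submodule.mem_top
      obtain ⟨i, hi, nu, hnu, hsum⟩ := Submodule.mem_sup.mp hf_top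
      have hfD' : f ∈ homogeneousSubmodule (Fin (n+1)) K m := hfD
      have hfcomp : homogeneousComponent m f = f := by
        rw [MvPolynomial.homogeneousComponent_of_mem hfD']
        simp
      have hiI : i ∈ I := hi
      have hieq : homogeneousComponent m i ∈ Im :=
        Submodule.mem_inf.mpr ⟨(Submodule.restrictScalars_mem K I _).mpr
          (homComp_mem hF hI hiI m), MvPolynomial.homogeneousComponent_mem m i⟩
      have hnueq : homogeneousComponent m nu ∈ Nm := by
        refine Submodule.mem_inf.mpr ⟨?_, MvPolynomial.homogeneousComponent_mem m nu⟩
        rw [NSpan, mem_span_monomials]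
        intro d hd
        rw [NSpan, mem_span_monomials] at hnu
        apply hnu
        rw [Finset.mem_coe, MvPolynomial.mem_support_iff] at hd ⊢
        intro h0
        rw [MvPolynomial.coeff_homogeneousComponent] at hd
        simp [h0] at hd
      have hfeq : homogeneousComponent m i + homogeneousComponent m nu = f := by
        rw [← map_add, hsum, hfcomp]
      exact Submodule.mem_sup.mpr ⟨_, hieq, _, hnueq, hfeq⟩
    have e1 := Submodule.finrank_sup_add_finrank_inf_eq Jm Nm
    have e2 := Submodule.finrank_sup_add_finrank_inf_eq Im Nm
    rw [hJN_sup, hJN_inf] at e1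
    rw [hIN_sup] at e2
    have hfb : Module.finrank K (↥(⊥ : Submodule K (MvPolynomial (Fin (n+1)) K))) = 0 :=
      finrank_bot K _
    rw [hfb] at e1
    have hdm := hdims m
    have hHFI : HF K I m = Module.finrank K ↥Im := rfl
    have hHFJ : HF K (Jideal K M) m = Module.finrank K ↥Jm := rfl
    rw [hHFI, hHFJ] at hdm
    have hfr0 : Module.finrank K ↥(Im ⊓ Nm) = 0 := by omega
    haveI : FiniteDimensional K ↥(Im ⊓ Nm) :=
      Submodule.finiteDimensional_of_le (inf_le_left (b := Nm))
    exact Submodule.finrank_eq_zero.mp hfr0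
  -- now conclude globally
  rw [eq_bot_iff]
  intro x hx
  have hcomp : ∀ m : ℕ, homogeneousComponent m x = 0 := by
    intro m
    have h1 : homogeneousComponent m x ∈ Submodule.restrictScalars K I ⊓
        homogeneousSubmodule (Fin (n+1)) K m := by
      refine Submodule.mem_inf.mpr ⟨?_, MvPolynomial.homogeneousComponent_mem m x⟩
      exact (Submodule.restrictScalars_mem K I _).mpr (homComp_mem hF hI hx.1 m)
    have h2 : homogeneousComponent m x ∈ NSpan K M ⊓ homogeneousSubmodule (Fin (n+1)) K m := by
      refine Submodule.mem_inf.mpr ⟨?_, MvPolynomial.homogeneousComponent_mem m x⟩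
      · rw [NSpan, mem_span_monomials]
        intro d hd
        have hxN : x ∈ NSpan K M := hx.2
        rw [NSpan, mem_span_monomials] at hxN
        apply hxN
        rw [Finset.mem_coe, MvPolynomial.mem_support_iff] at hd ⊢
        intro h0
        rw [MvPolynomial.coeff_homogeneousComponent] at hd
        simp [h0] at hd
    have := main m
    have hmem : homogeneousComponent m x ∈ (⊥ : Submodule K (MvPolynomial (Fin (n+1)) K)) :=
      this ▸ Submodule.mem_inf.mpr ⟨h1, h2⟩
    exact hmem
  have := MvPolynomial.sum_homogeneousComponent x
  rw [Submodule.mem_bot]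
  rw [← this]
  rw [Finset.sum_congr rfl (fun i _ => hcomp i)]
  simp

end Dims

section LI
variable {n : ℕ} {K : Type*} [Field K]

lemma range_mono_eq {M : Set (E n)} :
    Set.range (fun m : {m : E n // m ∉ M} => monomial m.1 (1:K))
      = (fun d => monomial d (1:K)) '' Mᶜ := by
  ext f
  constructor
  · rintro ⟨⟨d, hd⟩, rfl⟩
    exact ⟨d, hd, rfl⟩
  · rintro ⟨d, hd, rfl⟩
    exact ⟨⟨d, hd⟩, rfl⟩

lemma LI_of_inf_bot {M : Set (E n)} {I : Ideal (MvPolynomial (Fin (n+1)) K)}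
    (hinf : Submodule.restrictScalars K I ⊓ NSpan K M = ⊥) :
    LinearIndependent K (fun m : {m : E n // m ∉ M} =>
      Submodule.mkQ (Submodule.restrictScalars K I) (monomial m.1 (1:K))) := by
  have hli0 : LinearIndependent K (fun m : {m : E n // m ∉ M} => monomial m.1 (1:K)) := by
    have h2 := (MvPolynomial.basisMonomials (Fin (n+1)) K).linearIndependent.comp
      (fun m : {m : E n // m ∉ M} => m.1) Subtype.val_injective
    simp only [MvPolynomial.coe_basisMonomials, Function.comp_def] at h2
    exact h2
  have hdis : Disjoint
      (Submodule.span K (Set.range (fun m : {m : E n // m ∉ M} => monomial m.1 (1:K))))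
      (LinearMap.ker (Submodule.mkQ (Submodule.restrictScalars K I))) := by
    rw [range_mono_eq, Submodule.ker_mkQ]
    rw [disjoint_comm, disjoint_iff]
    exact hinf
  exact hli0.map hdis

lemma inf_bot_of_LI {M : Set (E n)} {I : Ideal (MvPolynomial (Fin (n+1)) K)}
    (hLI : LinearIndependent K (fun m : {m : E n // m ∉ M} =>
      Submodule.mkQ (Submodule.restrictScalars K I) (monomial m.1 (1:K)))) :
    Submodule.restrictScalars K I ⊓ NSpan K M = ⊥ := by
  rw [eq_bot_iff]
  intro x hx
  have hxN : x ∈ Submodule.span K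
      (Set.range (fun m : {m : E n // m ∉ M} => monomial m.1 (1:K))) := by
    rw [range_mono_eq]
    exact hx.2
  obtain ⟨c, hc⟩ := Finsupp.mem_span_range_iff_exists_finsupp.mp hxN
  have hq : Submodule.mkQ (Submodule.restrictScalars K I) x = 0 := by
    rw [← Submodule.ker_mkQ (Submodule.restrictScalars K I)] at hx
    exact hx.1
  have hq2 : (c.sum fun i a => a • Submodule.mkQ (Submodule.restrictScalars K I)
      (monomial i.1 (1:K))) = 0 := by
    rw [← hq, ← hc, map_finsuppSum]
    exact Finsupp.sum_congr fun i _ => by rw [map_smul]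
  have hc0 : c = 0 := by
    have := linearIndependent_iff.mp hLI c
    rw [Finsupp.linearCombination_apply] at this
    exact this hq2
  rw [Submodule.mem_bot, ← hc, hc0]
  simp

end LI

/-- For `J` strongly stable, a `J`-marked set `G` is a `J`-marked basis iff
`dim_K (G)_m ≤ dim_K J_m` for all `m`, iff `N(J)` is linearly independent in `S/(G)`. -/
theorem stmt7 {n : ℕ} {K : Type*} [Field K] (M : Set (E n)) (hup : UpClosed M)
    (hss : StronglyStable M) (B : Finset (E n)) (hB : IsMinBasis M B)
    (F : E n → MvPolynomial (Fin (n+1)) K) (hF : IsMarkedSet K M B F)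
    (I : Ideal (MvPolynomial (Fin (n+1)) K)) (hI : I = Ideal.span (F '' ↑B)) :
    (IsMarkedBasisIdeal K M I ↔ ∀ m : ℕ, HF K I m ≤ HF K (Jideal K M) m) ∧
    (IsMarkedBasisIdeal K M I ↔
      LinearIndependent K (fun m : {m : E n // m ∉ M} =>
        Submodule.mkQ (Submodule.restrictScalars K I) (monomial m.1 (1:K)))) := by
  have hsup : Submodule.restrictScalars K I ⊔ NSpan K M = ⊤ :=
    sup_eq_top hup hss hB hF hI
  constructor
  · constructor
    · rintro ⟨hinf, -⟩ m
      exact partA hup hinf m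
    · intro hdims
      exact ⟨partB hup hF hI hsup hdims, hsup⟩
  · constructor
    · rintro ⟨hinf, -⟩
      exact LI_of_inf_bot hinf
    · intro hLI
      exact ⟨inf_bot_of_LI hLI, hsup⟩
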